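/- arXiv:1806.10125 — 2 statements merged into one kernel-verified Lean document; each statement's English description precedes it below -/
import Mathlib

section
/- Let G be a real solvable Lie algebra of dimension n ≥ 4 whose derived ideal G¹ = [G,G] is abelian of dimension n − 2. Then the dimension of A_G is 1 or 2. -/
open Module

/-- The restriction to a Lie ideal `I` of the adjoint operator `ad X`,
as a linear endomorphism of `I`. -/
noncomputable def adRestrict {G : Type*} [LieRing G] [LieAlgebra ℝ G]
    (I : LieIdeal ℝ G) (X : G) : Module.End ℝ (I : Submodule ℝ G) :=
  (LieAlgebra.ad ℝ G X).restrict fun v hv => I.lie_mem hv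

/-- The span `A_G` of the restricted adjoint operators inside `End(G¹)`. -/
noncomputable def adSpan (G : Type*) [LieRing G] [LieAlgebra ℝ G] :
    Submodule ℝ (Module.End ℝ ((LieAlgebra.derivedSeries ℝ G 1 : LieIdeal ℝ G) : Submodule ℝ G)) :=
  Submodule.span ℝ (Set.range fun X : G => adRestrict (LieAlgebra.derivedSeries ℝ G 1) X)

/-!
`X ↦ a_X` is linear and vanishes on the abelian ideal `G¹`, so `dim A_G ≤ dim G - dim G¹ = 2`.
If `A_G = 0`, then `G¹` is central; writing `G = G¹ + span {x, y}`, every bracket is then a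
multiple of `⁅x, y⁆`, so `dim G¹ ≤ 1 < n - 2`.
-/

open LieAlgebra

theorem lie_mem_span_singleton_of_sup_span_pair_eq_top {R L : Type*} [CommRing R] [LieRing L]
    [LieAlgebra R L] {I : Submodule R L} (hI : ∀ X : L, ∀ a ∈ I, ⁅X, a⁆ = 0) {x y : L}
    (hxy : I ⊔ Submodule.span R {x, y} = ⊤) (u v : L) :
    ⁅u, v⁆ ∈ Submodule.span R {⁅x, y⁆} := by
  have hdec : ∀ w : L, ∃ a ∈ I, ∃ s t : R, a + (s • x + t • y) = w := fun w => by
    obtain ⟨a, ha, c, hc, rfl⟩ := Submodule.mem_sup.mp (hxy ▸ Submodule.mem_top (x := w))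
    obtain ⟨s, t, rfl⟩ := Submodule.mem_span_pair.mp hc
    exact ⟨a, ha, s, t, rfl⟩
  obtain ⟨a, ha, s, t, rfl⟩ := hdec u
  obtain ⟨b, hb, s', t', rfl⟩ := hdec v
  have ha' : ∀ w : L, ⁅a, w⁆ = 0 := fun w => by rw [← lie_skew, hI w a ha, neg_zero]
  have hyx : ⁅y, x⁆ = -⁅x, y⁆ := (lie_skew y x).symm
  have heq : ⁅a + (s • x + t • y), b + (s' • x + t' • y)⁆ = (s * t' - t * s') • ⁅x, y⁆ := by
    simp only [add_lie, lie_add, smul_lie, lie_smul, ha', hI _ b hb, lie_self, hyx]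
    module
  exact heq ▸ Submodule.smul_mem _ _ (Submodule.mem_span_singleton_self _)

theorem Submodule.exists_sup_span_pair_eq_top {K V : Type*} [DivisionRing K] [AddCommGroup V]
    [Module K V] (I : Submodule K V) (h : finrank K (V ⧸ I) = 2) :
    ∃ x y : V, I ⊔ Submodule.span K {x, y} = ⊤ := by
  have : Module.Finite K (V ⧸ I) := Module.finite_of_finrank_pos (by omega)
  let b := finBasisOfFinrankEq K (V ⧸ I) h
  obtain ⟨x, hx⟩ := I.mkQ_surjective (b 0)
  obtain ⟨y, hy⟩ := I.mkQ_surjective (b 1)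
  refine ⟨x, y, (Submodule.map_mkQ_eq_top I _).mp ?_⟩
  rw [Submodule.map_span, Set.image_pair, hx, hy, ← b.span_eq]
  congr 1
  ext q
  simp [Fin.exists_fin_two, eq_comm]

theorem finrank_derivedSeries_one_le_one_of_le_center {K L : Type*} [Field K] [LieRing L]
    [LieAlgebra K L] [FiniteDimensional K L]
    (hcentral : derivedSeries K L 1 ≤ center K L)
    (hcodim : finrank K L = finrank K (derivedSeries K L 1) + 2) :
    finrank K (derivedSeries K L 1) ≤ 1 := by
  set I : Submodule K L := derivedSeries K L 1
  have hQ : finrank K (L ⧸ I) = 2 := by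
    have := I.finrank_quotient_add_finrank
    change finrank K L = finrank K I + 2 at hcodim
    omega
  obtain ⟨x, y, hxy⟩ := I.exists_sup_span_pair_eq_top hQ
  have hI : ∀ X : L, ∀ a ∈ I, ⁅X, a⁆ = 0 := fun X a ha =>
    (LieModule.mem_maxTrivSubmodule K L L a).mp (hcentral ha) X
  have hle : I ≤ Submodule.span K {⁅x, y⁆} := by
    change ((⁅(⊤ : LieIdeal K L), ⊤⁆ : LieIdeal K L) : Submodule K L) ≤ _
    rw [LieIdeal.toLieSubalgebra_toSubmodule, LieSubmodule.lieIdeal_oper_eq_linear_span',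
      Submodule.span_le]
    rintro _ ⟨u, -, v, -, rfl⟩
    exact lie_mem_span_singleton_of_sup_span_pair_eq_top hI hxy u v
  exact (Submodule.finrank_mono hle).trans ((finrank_span_le_card _).trans (by simp))

noncomputable def adRestrictₗ {G : Type*} [LieRing G] [LieAlgebra ℝ G] (I : LieIdeal ℝ G) :
    G →ₗ[ℝ] Module.End ℝ (I : Submodule ℝ G) where
  toFun := adRestrict I
  map_add' X Y := by ext v; exact add_lie X Y (v : G)
  map_smul' c X := by ext v; exact smul_lie c X (v : G)

theorem adSpan_eq_range (G : Type*) [LieRing G] [LieAlgebra ℝ G] :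
    adSpan G = LinearMap.range (adRestrictₗ (derivedSeries ℝ G 1)) := by
  rw [adSpan, ← Submodule.span_eq (LinearMap.range _), LinearMap.coe_range]
  rfl

theorem finrank_adSpan_add_finrank_derivedSeries_le {G : Type*} [LieRing G] [LieAlgebra ℝ G]
    [FiniteDimensional ℝ G]
    (habelian : ∀ u v : G, u ∈ derivedSeries ℝ G 1 → v ∈ derivedSeries ℝ G 1 → ⁅u, v⁆ = 0) :
    finrank ℝ (adSpan G) + finrank ℝ (derivedSeries ℝ G 1) ≤ finrank ℝ G := by
  have hker : ((derivedSeries ℝ G 1 : LieIdeal ℝ G) : Submodule ℝ G) ≤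
      LinearMap.ker (adRestrictₗ (derivedSeries ℝ G 1)) := fun u hu => by
    ext v
    exact habelian u v hu v.2
  change _ + finrank ℝ (derivedSeries ℝ G 1 : Submodule ℝ G) ≤ _
  rw [adSpan_eq_range, ← (adRestrictₗ (derivedSeries ℝ G 1)).finrank_range_add_finrank_ker]
  exact Nat.add_le_add_left (Submodule.finrank_mono hker) _

theorem derivedSeries_le_center_of_adSpan_eq_bot {G : Type*} [LieRing G] [LieAlgebra ℝ G]
    (h : adSpan G = ⊥) : derivedSeries ℝ G 1 ≤ center ℝ G := fun v hv => by
  rw [LieModule.mem_maxTrivSubmodule]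
  intro X
  have hX : adRestrict (derivedSeries ℝ G 1) X = 0 := by
    rw [← Submodule.mem_bot ℝ, ← h]
    exact Submodule.subset_span ⟨X, rfl⟩
  exact congrArg (fun f => ((f ⟨v, hv⟩ : _) : G)) hX

theorem finrank_adSpan_of_codim_two_abelian_derived_general
    (G : Type*) [LieRing G] [LieAlgebra ℝ G] [FiniteDimensional ℝ G]
    (n : ℕ) (hn : Module.finrank ℝ G = n) (hn4 : 4 ≤ n)
    (habelian : ∀ u v : G, u ∈ LieAlgebra.derivedSeries ℝ G 1 →
      v ∈ LieAlgebra.derivedSeries ℝ G 1 → ⁅u, v⁆ = 0)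
    (hdim : Module.finrank ℝ (LieAlgebra.derivedSeries ℝ G 1) = n - 2) :
    Module.finrank ℝ (adSpan G) = 1 ∨ Module.finrank ℝ (adSpan G) = 2 := by
  have hrank := finrank_adSpan_add_finrank_derivedSeries_le habelian
  have hne : finrank ℝ (adSpan G) ≠ 0 := fun h0 => by
    have := finrank_derivedSeries_one_le_one_of_le_center
      (derivedSeries_le_center_of_adSpan_eq_bot (Submodule.finrank_eq_zero.mp h0)) (by omega)
    omega
  omega

/-- if `G` is a real solvable Lie algebra of dimension `n ≥ 4` whose derived
ideal is abelian of dimension `n - 2`, then `dim A_G ∈ {1, 2}`. -/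
theorem finrank_adSpan_of_codim_two_abelian_derived
    (G : Type*) [LieRing G] [LieAlgebra ℝ G] [FiniteDimensional ℝ G]
    [LieAlgebra.IsSolvable G] (n : ℕ) (hn : Module.finrank ℝ G = n) (hn4 : 4 ≤ n)
    (habelian : ∀ u v : G, u ∈ LieAlgebra.derivedSeries ℝ G 1 →
      v ∈ LieAlgebra.derivedSeries ℝ G 1 → ⁅u, v⁆ = 0)
    (hdim : Module.finrank ℝ (LieAlgebra.derivedSeries ℝ G 1) = n - 2) :
    Module.finrank ℝ (adSpan G) = 1 ∨ Module.finrank ℝ (adSpan G) = 2 :=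
  finrank_adSpan_of_codim_two_abelian_derived_general G n hn hn4 habelian hdim
end

section
/- Let G be a real solvable Lie algebra of dimension n ≥ 4 whose derived ideal G¹ = [G,G] is abelian of dimension n − 2, with A_G of dimension 1, and let Y, Z ∈ G be linearly independent elements not in G¹ with a_Y = 0 and A_G = span{a_Z}. Suppose [Y,Z] ≠ 0 and a_Z is singular (not injective on G¹). Then: (i) G is indecomposable; (ii) the rank of a_Z equals n − 3; and (iii) there exist a basis (X₁, …, X_{n−2}) of G¹ and elements Y′, Z′ ∈ G with G = G¹ ⊕ span{Y′, Z′} as vector spaces, [Z′, Y′] = X_{n−2}, [Y′, X_i] = 0 for all i, and the matrix of a_{Z′} in the basis (X₁, …, X_{n−2}) has block form [[A,0],[0,0]] or [[0,A],[0,0]] for some invertible (n−3)×(n−3) real matrix A (in the first form A occupies rows and columns 1,…,n−3; in the second form the first column is zero and A occupies rows 1,…,n−3 and columns 2,…,n−2). -/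
/-!
Since `a_Y = 0` and `a_Z ≠ 0`, the elements `Y` and `Z` are independent modulo the abelian ideal
`G¹`, so `G = G¹ ⊕ span {Y, Z}`. Every `a_X` is a multiple of `a_Z`, hence `[G, G¹] ⊆ a_Z(G¹)`
and `G¹ = a_Z(G¹) + ℝ [Y, Z]`. As `a_Z` is singular, its range has codimension one in `G¹` and
does not contain `[Y, Z]`.

If `G = I ⊕ J` with nonzero ideals, then either `G¹ + I = G` (or `G¹ + J = G`), which forces
`G¹ ⊆ I` and so `I = G`; or `G = G¹ ⊕ span {a, b}` with `a ∈ I`, `b ∈ J`, where `[a, b] = 0`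
gives `G¹ = a_Z(G¹)`, i.e. `a_Z` onto, contradicting its singularity.

The kernel of `a_Z` is a line, either complementary to the range (block form `[[A,0],[0,0]]`) or
contained in it (block form `[[0,A],[0,0]]`). Completing a basis of the range by a vector
`w₀ ≡ [Y, Z]` modulo the range and writing `w₀ - [Y, Z] = a_Z u`, the element `Y' = u - Y`
satisfies `a_{Y'} = 0` and `[Z, Y'] = w₀`.
-/

open Module

/-- The `(k+1)`-square matrix `[[A, 0], [0, 0]]`: `A` occupies rows and columns `0,…,k-1`. -/
def blockDiag {k : ℕ} (A : Matrix (Fin k) (Fin k) ℝ) : Matrix (Fin (k + 1)) (Fin (k + 1)) ℝ :=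
  fun i j => if h : (i : ℕ) < k ∧ (j : ℕ) < k then A ⟨i, h.1⟩ ⟨j, h.2⟩ else 0

/-- The `(k+1)`-square matrix `[[0, A], [0, 0]]`: zero first column, `A` occupies rows
`0,…,k-1` and columns `1,…,k`. -/
def blockShift {k : ℕ} (A : Matrix (Fin k) (Fin k) ℝ) : Matrix (Fin (k + 1)) (Fin (k + 1)) ℝ :=
  fun i j =>
    if h : (i : ℕ) < k ∧ 0 < (j : ℕ) then A ⟨i, h.1⟩ ⟨(j : ℕ) - 1, by
      have := j.isLt; omega⟩ else 0

open Submodule LieAlgebra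

section LinearAlgebra

variable {K V : Type*} [Field K] [AddCommGroup V] [Module K V]

theorem Module.Basis.span_range_subtype_comp {ι : Type*} {W : Submodule K V} (e : Basis ι K W) :
    span K (Set.range (W.subtype ∘ e)) = W := by
  rw [Set.range_comp, span_image, e.span_eq, map_subtype_top]

theorem Module.Basis.repr_last_eq_zero {k : ℕ} (B : Basis (Fin (k + 1)) K V) {v : V}
    (hv : v ∈ span K (Set.range (B ∘ Fin.castSucc))) : B.repr v (Fin.last k) = 0 := by
  rw [Set.range_comp, B.mem_span_image] at hv
  by_contra h
  obtain ⟨i, hi⟩ := hv (Finsupp.mem_support_iff.2 h)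
  exact (Fin.castSucc_lt_last i).ne hi

theorem isUnit_submatrix_toMatrix {k : ℕ} (B : Basis (Fin (k + 1)) K V) (f : V →ₗ[K] V)
    (hf : LinearMap.range f ≤ span K (Set.range (B ∘ Fin.castSucc)))
    {em : Fin k → Fin (k + 1)} (hem : Function.Injective em)
    (hdisj : Disjoint (span K (Set.range (B ∘ em))) (LinearMap.ker f)) :
    IsUnit ((LinearMap.toMatrix B B f).submatrix Fin.castSucc em) := by
  rw [← Matrix.mulVec_injective_iff_isUnit, ← Matrix.coe_mulVecLin, ← LinearMap.ker_eq_bot,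
    LinearMap.ker_eq_bot']
  intro c hc
  set v := ∑ j, c j • B (em j)
  have hfv : f v = 0 := by
    refine B.repr.map_eq_zero_iff.1 (Finsupp.ext fun i => ?_)
    induction i using Fin.lastCases with
    | last => exact B.repr_last_eq_zero (hf (LinearMap.mem_range_self f v))
    | cast i =>
      have hci := congrFun hc i
      simp only [Matrix.mulVecLin_apply, Matrix.mulVec, dotProduct, Matrix.submatrix_apply,
        LinearMap.toMatrix_apply, Pi.zero_apply] at hci
      simp [v, map_sum, map_smul, ← hci, mul_comm]
  have hv : v = 0 := disjoint_def.1 hdisj v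
    (sum_mem fun j _ => smul_mem _ _ (subset_span ⟨j, rfl⟩)) hfv
  exact funext (Fintype.linearIndependent_iff.1 (B.linearIndependent.comp em hem) c hv)

theorem exists_basis_comp_castSucc_eq {W : Submodule K V} {k : ℕ}
    (e : Basis (Fin k) K W) {w : V} (hw : w ∉ W) (hV : finrank K V = k + 1) :
    ∃ B : Basis (Fin (k + 1)) K V, B ∘ Fin.castSucc = W.subtype ∘ e ∧ B (Fin.last k) = w := by
  have hli : LinearIndependent K (Fin.snoc (W.subtype ∘ e) w : Fin (k + 1) → V) :=
    linearIndependent_finSnoc.2 ⟨e.linearIndependent.map' _ W.ker_subtype,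
      by rwa [e.span_range_subtype_comp]⟩
  refine ⟨basisOfLinearIndependentOfCardEqFinrank hli (by simp [hV]), ?_, ?_⟩ <;>
    simp [coe_basisOfLinearIndependentOfCardEqFinrank, Function.comp_def]

variable [FiniteDimensional K V] {f : V →ₗ[K] V} {U : Submodule K V}

theorem exists_basis_zero_eq {p : ℕ} (hV : finrank K V = p + 1)
    {x : V} (hx : x ≠ 0) : ∃ b : Basis (Fin (p + 1)) K V, b 0 = x := by
  obtain ⟨C, hC⟩ := (K ∙ x).exists_isCompl
  have hC_dim : finrank K C = p := by
    have := Submodule.finrank_add_eq_of_isCompl hC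
    rw [finrank_span_singleton hx] at this
    omega
  refine ⟨Basis.mkFinCons x (finBasisOfFinrankEq K C hC_dim) (fun c y hy hcy => ?_)
    (fun z => ?_), by simp⟩
  · have hcx : c • x = 0 := disjoint_def.1 hC.disjoint _ (smul_mem _ _ (mem_span_singleton_self x))
      (by rw [eq_neg_of_add_eq_zero_left hcy]; exact C.neg_mem hy)
    exact (smul_eq_zero.1 hcx).resolve_right hx
  · obtain ⟨_, ha, y, hy, rfl⟩ := mem_sup.1 (hC.sup_eq_top ▸ mem_top : z ∈ (K ∙ x) ⊔ C)
    obtain ⟨c, rfl⟩ := mem_span_singleton.1 ha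
    exact ⟨-c, by simpa [add_comm, add_assoc] using hy⟩

theorem finrank_range_add_one_le_of_not_injective (hf : ¬ Function.Injective f) :
    finrank K (LinearMap.range f) + 1 ≤ finrank K V := by
  have hker : LinearMap.ker f ≠ ⊥ := mt LinearMap.ker_eq_bot.1 hf
  rw [← f.finrank_range_add_finrank_ker, Nat.add_le_add_iff_left, Nat.one_le_iff_ne_zero]
  exact mt Submodule.finrank_eq_zero.1 hker

theorem notMem_range_of_sup_span_eq_top (hf : ¬ Function.Injective f) {w : V}
    (hw : LinearMap.range f ⊔ K ∙ w = ⊤) : w ∉ LinearMap.range f := fun hwf => by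
  rw [sup_eq_left.2 ((span_singleton_le_iff_mem _ _).2 hwf), LinearMap.range_eq_top] at hw
  exact hf (LinearMap.injective_iff_surjective.2 hw)

theorem finrank_range_add_one_of_sup_span_eq_top (hf : ¬ Function.Injective f) {w : V}
    (hw : LinearMap.range f ⊔ K ∙ w = ⊤) : finrank K (LinearMap.range f) + 1 = finrank K V := by
  refine le_antisymm (finrank_range_add_one_le_of_not_injective hf) ?_
  calc finrank K V = finrank K (LinearMap.range f ⊔ K ∙ w : Submodule K V) := by
        rw [hw, finrank_top]
    _ ≤ finrank K (LinearMap.range f) + finrank K (K ∙ w) :=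
        finrank_add_le_finrank_add_finrank _ _
    _ ≤ finrank K (LinearMap.range f) + 1 := by
        gcongr
        simpa using finrank_span_le_card (R := K) {w}

theorem isCompl_span_pair {a b : V} (hab : ∀ s t : K, s • a + t • b ∈ U → s = 0 ∧ t = 0)
    (hV : finrank K V ≤ finrank K U + 2) : IsCompl U (span K {a, b}) := by
  have hli : LinearIndependent K ![a, b] :=
    LinearIndependent.pair_iff.2 fun s t h => hab s t (h ▸ U.zero_mem)
  have hspan : finrank K (span K {a, b}) = 2 := by
    have := finrank_span_eq_card hli
    rwa [Matrix.range_cons_cons_empty, Fintype.card_fin] at this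
  refine (isCompl_iff_disjoint _ _ (by omega)).2 (disjoint_def.2 fun x hxU hx => ?_)
  obtain ⟨s, t, rfl⟩ := mem_span_pair.1 hx
  obtain ⟨rfl, rfl⟩ := hab s t hxU
  simp

theorem exists_le_sup_span_singleton (hV : finrank K V ≤ finrank K U + 2) {S : Submodule K V}
    (hS : U ⊔ S ≠ ⊤) : ∃ a ∈ S, S ≤ U ⊔ K ∙ a := by
  by_cases hSU : S ≤ U
  · exact ⟨0, S.zero_mem, hSU.trans le_sup_left⟩
  obtain ⟨a, haS, haU⟩ := SetLike.not_le_iff_exists.1 hSU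
  have hle : U ⊔ K ∙ a ≤ U ⊔ S := sup_le_sup_left ((span_singleton_le_iff_mem _ _).2 haS) U
  have heq : U ⊔ K ∙ a = U ⊔ S := eq_of_le_of_finrank_le hle <| by
    have := finrank_lt hS
    rw [finrank_sup_span_singleton haU]
    omega
  exact ⟨a, haS, heq ▸ le_sup_right⟩

theorem sup_eq_top_or_sup_eq_top_or_exists_sup_span_pair_eq_top
    (hV : finrank K V ≤ finrank K U + 2) {S T : Submodule K V} (hST : S ⊔ T = ⊤) :
    U ⊔ S = ⊤ ∨ U ⊔ T = ⊤ ∨ ∃ a ∈ S, ∃ b ∈ T, U ⊔ span K {a, b} = ⊤ := by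
  by_cases hS : U ⊔ S = ⊤
  · exact Or.inl hS
  by_cases hT : U ⊔ T = ⊤
  · exact Or.inr (Or.inl hT)
  obtain ⟨a, haS, hSa⟩ := exists_le_sup_span_singleton hV hS
  obtain ⟨b, hbT, hTb⟩ := exists_le_sup_span_singleton hV hT
  refine Or.inr (Or.inr ⟨a, haS, b, hbT, eq_top_iff.2 ?_⟩)
  calc ⊤ = S ⊔ T := hST.symm
    _ ≤ (U ⊔ K ∙ a) ⊔ (U ⊔ K ∙ b) := sup_le_sup hSa hTb
    _ = U ⊔ span K {a, b} := by rw [span_insert, ← sup_sup_distrib_left]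

end LinearAlgebra

section BlockMatrix

variable {k : ℕ} (M : Matrix (Fin (k + 1)) (Fin (k + 1)) ℝ)

theorem blockDiag_submatrix_castSucc (hrow : ∀ j, M (Fin.last k) j = 0)
    (hcol : ∀ i, M i (Fin.last k) = 0) :
    blockDiag (M.submatrix Fin.castSucc Fin.castSucc) = M := by
  ext i j
  induction i using Fin.lastCases with
  | last => simp [blockDiag, hrow]
  | cast i =>
    induction j using Fin.lastCases with
    | last => simp [blockDiag, hcol]
    | cast j => simp [blockDiag]

theorem blockShift_submatrix_succ (hrow : ∀ j, M (Fin.last k) j = 0) (hcol : ∀ i, M i 0 = 0) :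
    blockShift (M.submatrix Fin.castSucc Fin.succ) = M := by
  ext i j
  induction i using Fin.lastCases with
  | last => simp [blockShift, hrow]
  | cast i =>
    induction j using Fin.cases with
    | zero => simp [blockShift, hcol]
    | succ j => simp [blockShift]

end BlockMatrix

section EndomorphismCorankOne

variable {V : Type*} [AddCommGroup V] [Module ℝ V] [FiniteDimensional ℝ V] {f : V →ₗ[ℝ] V}

theorem exists_basis_toMatrix_eq_blockDiag {k : ℕ} (hk : finrank ℝ (LinearMap.range f) = k)
    (hV : finrank ℝ V = k + 1) (hdisj : Disjoint (LinearMap.ker f) (LinearMap.range f))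
    {w : V} (hw : w ∉ LinearMap.range f) :
    ∃ (B : Basis (Fin (k + 1)) ℝ V) (A : Matrix (Fin k) (Fin k) ℝ),
      B (Fin.last k) - w ∈ LinearMap.range f ∧ IsUnit A ∧
        LinearMap.toMatrix B B f = blockDiag A := by
  have hcompl : IsCompl (LinearMap.ker f) (LinearMap.range f) :=
    (isCompl_iff_disjoint _ _ (by rw [add_comm, f.finrank_range_add_finrank_ker])).2 hdisj
  obtain ⟨p, hp, q, hq, rfl⟩ :=
    mem_sup.1 (hcompl.sup_eq_top ▸ mem_top : w ∈ LinearMap.ker f ⊔ LinearMap.range f)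
  let e := finBasisOfFinrankEq ℝ _ hk
  obtain ⟨B, hBe, hBp⟩ := exists_basis_comp_castSucc_eq e (fun hp' => hw (add_mem hp' hq)) hV
  have hspan : span ℝ (Set.range (B ∘ Fin.castSucc)) = LinearMap.range f := by
    rw [hBe, e.span_range_subtype_comp]
  refine ⟨B, _, ?_, isUnit_submatrix_toMatrix B f hspan.ge (Fin.castSucc_injective k)
    (hspan ▸ hdisj.symm), (blockDiag_submatrix_castSucc _ (fun j => ?_) (fun i => ?_)).symm⟩
  · simpa [hBp] using neg_mem hq
  · exact B.repr_last_eq_zero (hspan ▸ LinearMap.mem_range_self f _)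
  · simp [LinearMap.toMatrix_apply, hBp, LinearMap.mem_ker.1 hp]

theorem exists_basis_toMatrix_eq_blockShift {k : ℕ} (hk : finrank ℝ (LinearMap.range f) = k)
    (hV : finrank ℝ V = k + 1) {x : V} (hx : x ≠ 0) (hker : LinearMap.ker f = ℝ ∙ x)
    (hxf : x ∈ LinearMap.range f) {w : V} (hw : w ∉ LinearMap.range f) :
    ∃ (B : Basis (Fin (k + 1)) ℝ V) (A : Matrix (Fin k) (Fin k) ℝ),
      B (Fin.last k) - w ∈ LinearMap.range f ∧ IsUnit A ∧
        LinearMap.toMatrix B B f = blockShift A := by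
  obtain ⟨p, rfl⟩ : ∃ p, k = p + 1 := Nat.exists_eq_succ_of_ne_zero <| by
    rw [← hk, Ne, Submodule.finrank_eq_zero, Submodule.eq_bot_iff]
    exact fun h => hx (h x hxf)
  obtain ⟨e, he⟩ := exists_basis_zero_eq hk (x := ⟨x, hxf⟩) (by simpa using hx)
  obtain ⟨B, hBe, hBw⟩ := exists_basis_comp_castSucc_eq e hw hV
  have hspan : span ℝ (Set.range (B ∘ Fin.castSucc)) = LinearMap.range f := by
    rw [hBe, e.span_range_subtype_comp]
  have hB0 : B 0 = x := by simpa [he] using congrFun hBe 0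
  have hdisj : Disjoint (span ℝ (Set.range (B ∘ Fin.succ))) (LinearMap.ker f) := by
    rw [hker, ← hB0, ← Set.image_singleton, Set.range_comp]
    exact B.linearIndependent.disjoint_span_image
      (Set.disjoint_singleton_right.2 fun ⟨i, hi⟩ => Fin.succ_ne_zero i hi)
  refine ⟨B, _, by simp [hBw], isUnit_submatrix_toMatrix B f hspan.ge (Fin.succ_injective _) hdisj,
    (blockShift_submatrix_succ _ (fun j => ?_) (fun i => ?_)).symm⟩
  · exact B.repr_last_eq_zero (hspan ▸ LinearMap.mem_range_self f _)
  · have hfx : f x = 0 := by simp [← LinearMap.mem_ker, hker, mem_span_singleton_self]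
    simp [LinearMap.toMatrix_apply, hB0, hfx]

theorem exists_basis_toMatrix_eq_blockDiag_or_blockShift {k : ℕ}
    (hk : finrank ℝ (LinearMap.range f) = k) (hV : finrank ℝ V = k + 1)
    {w : V} (hw : w ∉ LinearMap.range f) :
    ∃ (B : Basis (Fin (k + 1)) ℝ V) (A : Matrix (Fin k) (Fin k) ℝ),
      B (Fin.last k) - w ∈ LinearMap.range f ∧ IsUnit A ∧
        (LinearMap.toMatrix B B f = blockDiag A ∨ LinearMap.toMatrix B B f = blockShift A) := by
  have hker : finrank ℝ (LinearMap.ker f) = 1 := by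
    have := f.finrank_range_add_finrank_ker
    omega
  obtain ⟨x, hx, hker_eq⟩ : ∃ x : V, x ≠ 0 ∧ LinearMap.ker f = ℝ ∙ x := by
    obtain ⟨x, hxk, hx⟩ := (LinearMap.ker f).ne_bot_iff.1
      (mt Submodule.finrank_eq_zero.2 (by omega))
    exact ⟨x, hx, eq_span_singleton_of_mem_of_finrank_eq_one hker hxk hx⟩
  by_cases hxf : x ∈ LinearMap.range f
  · obtain ⟨B, A, hBw, hA, hf⟩ := exists_basis_toMatrix_eq_blockShift hk hV hx hker_eq hxf hw
    exact ⟨B, A, hBw, hA, Or.inr hf⟩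
  · have hdisj : Disjoint (LinearMap.ker f) (LinearMap.range f) :=
      hker_eq ▸ ((disjoint_span_singleton' hx).2 hxf).symm
    obtain ⟨B, A, hBw, hA, hf⟩ := exists_basis_toMatrix_eq_blockDiag hk hV hdisj hw
    exact ⟨B, A, hBw, hA, Or.inl hf⟩

end EndomorphismCorankOne

section LieAlgebra

variable {R L : Type*} [CommRing R] [LieRing L] [LieAlgebra R L]

theorem lie_mem_derivedSeries_one (x y : L) :
    ⁅x, y⁆ ∈ (derivedSeries R L 1 : Submodule R L) := by
  rw [coe_derivedSeries_one_eq]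
  exact subset_span ⟨x, y, rfl⟩

theorem derivedSeries_one_le {P : Submodule R L} (h : ∀ x y : L, ⁅x, y⁆ ∈ P) :
    (derivedSeries R L 1 : Submodule R L) ≤ P := by
  rw [coe_derivedSeries_one_eq, span_le]
  rintro _ ⟨x, y, rfl⟩
  exact h x y

theorem derivedSeries_one_le_of_sup_eq_top {U S P : Submodule R L} (hUS : U ⊔ S = ⊤)
    (hUU : ∀ u ∈ U, ∀ u' ∈ U, ⁅u, u'⁆ ∈ P) (hUS' : ∀ u ∈ U, ∀ s ∈ S, ⁅u, s⁆ ∈ P)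
    (hSS : ∀ s ∈ S, ∀ s' ∈ S, ⁅s, s'⁆ ∈ P) : (derivedSeries R L 1 : Submodule R L) ≤ P := by
  refine derivedSeries_one_le fun x y => ?_
  obtain ⟨u, hu, s, hs, rfl⟩ := mem_sup.1 (hUS ▸ mem_top : x ∈ U ⊔ S)
  obtain ⟨u', hu', s', hs', rfl⟩ := mem_sup.1 (hUS ▸ mem_top : y ∈ U ⊔ S)
  rw [add_lie, lie_add, lie_add, ← lie_skew s u']
  exact add_mem (add_mem (hUU u hu u' hu') (hUS' u hu s' hs'))
    (add_mem (neg_mem (hUS' u' hu' s hs)) (hSS s hs s' hs'))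

theorem lie_mem_span_singleton_of_mem_span_pair {a b s t : L} (hs : s ∈ span R {a, b})
    (ht : t ∈ span R {a, b}) : ⁅s, t⁆ ∈ R ∙ ⁅a, b⁆ := by
  obtain ⟨α, β, rfl⟩ := mem_span_pair.1 hs
  obtain ⟨γ, δ, rfl⟩ := mem_span_pair.1 ht
  refine mem_span_singleton.2 ⟨α * δ - β * γ, ?_⟩
  simp only [add_lie, lie_add, smul_lie, lie_smul, lie_self, ← lie_skew b a]
  module

theorem lieIdeal_eq_top_of_sup_eq_top
    (habelian : ∀ u v : L, u ∈ derivedSeries R L 1 → v ∈ derivedSeries R L 1 → ⁅u, v⁆ = 0)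
    {I : LieIdeal R L} (hI : (derivedSeries R L 1 : Submodule R L) ⊔ I = ⊤) : I = ⊤ := by
  have hDI : (derivedSeries R L 1 : Submodule R L) ≤ I :=
    derivedSeries_one_le_of_sup_eq_top hI
      (fun u hu u' hu' => by rw [habelian u u' hu hu']; exact zero_mem _)
      (fun _ _ _ hi => I.lie_mem hi) (fun _ _ _ hi' => I.lie_mem hi')
  rw [sup_eq_right.2 hDI, LieIdeal.toLieSubalgebra_toSubmodule] at hI
  exact (LieSubmodule.toSubmodule_eq_top _).1 hI

end LieAlgebra

section AdRestrict

variable {G : Type*} [LieRing G] [LieAlgebra ℝ G]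

@[simp]
theorem adRestrict_apply_coe (I : LieIdeal ℝ G) (X : G) (v : (I : Submodule ℝ G)) :
    (adRestrict I X v : G) = ⁅X, (v : G)⁆ :=
  rfl

theorem adRestrict_add (I : LieIdeal ℝ G) (X X' : G) :
    adRestrict I (X + X') = adRestrict I X + adRestrict I X' := by
  ext v : 1
  exact Subtype.ext (add_lie _ _ _)

theorem adRestrict_smul (I : LieIdeal ℝ G) (c : ℝ) (X : G) :
    adRestrict I (c • X) = c • adRestrict I X := by
  ext v : 1
  exact Subtype.ext (smul_lie _ _ _)

theorem adRestrict_sub (I : LieIdeal ℝ G) (X X' : G) :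
    adRestrict I (X - X') = adRestrict I X - adRestrict I X' := by
  ext v : 1
  exact Subtype.ext (sub_lie _ _ _)

theorem adRestrict_eq_zero_of_mem {I : LieIdeal ℝ G}
    (hI : ∀ u v : G, u ∈ I → v ∈ I → ⁅u, v⁆ = 0) {X : G} (hX : X ∈ I) : adRestrict I X = 0 :=
  LinearMap.ext fun v => Subtype.ext (hI X v hX v.2)

theorem adRestrict_apply_mem_range {Z : G}
    (hspan : (adSpan G : Submodule ℝ _) = span ℝ {adRestrict (derivedSeries ℝ G 1) Z})
    (X : G) (v : (derivedSeries ℝ G 1 : Submodule ℝ G)) :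
    adRestrict (derivedSeries ℝ G 1) X v ∈
      LinearMap.range (adRestrict (derivedSeries ℝ G 1) Z) := by
  have hX : adRestrict (derivedSeries ℝ G 1) X ∈ adSpan G := subset_span ⟨X, rfl⟩
  obtain ⟨c, hc⟩ := mem_span_singleton.1 (hspan ▸ hX)
  exact ⟨c • v, by rw [← hc, LinearMap.smul_apply, map_smul]⟩

theorem isCompl_derivedSeries_span_pair [FiniteDimensional ℝ G] {Y Z : G}
    (habelian : ∀ u v : G, u ∈ derivedSeries ℝ G 1 → v ∈ derivedSeries ℝ G 1 → ⁅u, v⁆ = 0)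
    (haZ : adRestrict (derivedSeries ℝ G 1) Z ≠ 0) (hY : Y ∉ derivedSeries ℝ G 1)
    (haY : adRestrict (derivedSeries ℝ G 1) Y = 0)
    (hG : finrank ℝ G ≤ finrank ℝ (derivedSeries ℝ G 1 : Submodule ℝ G) + 2) :
    IsCompl (derivedSeries ℝ G 1 : Submodule ℝ G) (span ℝ {Y, Z}) := by
  refine isCompl_span_pair (fun s t hst => ?_) hG
  have h0 :
      s • adRestrict (derivedSeries ℝ G 1) Y + t • adRestrict (derivedSeries ℝ G 1) Z = 0 := by
    rw [← adRestrict_smul, ← adRestrict_smul, ← adRestrict_add]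
    exact adRestrict_eq_zero_of_mem habelian hst
  rw [haY, smul_zero, zero_add, smul_eq_zero] at h0
  obtain rfl := h0.resolve_right haZ
  rw [zero_smul, add_zero] at hst
  exact ⟨by_contra fun hs => hY ((smul_mem_iff _ hs).1 hst), rfl⟩

theorem range_adRestrict_sup_span_eq_top {Z : G}
    (habelian : ∀ u v : G, u ∈ derivedSeries ℝ G 1 → v ∈ derivedSeries ℝ G 1 → ⁅u, v⁆ = 0)
    (hspan : (adSpan G : Submodule ℝ _) = span ℝ {adRestrict (derivedSeries ℝ G 1) Z})
    {a b : G} (hab : (derivedSeries ℝ G 1 : Submodule ℝ G) ⊔ span ℝ {a, b} = ⊤) :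
    LinearMap.range (adRestrict (derivedSeries ℝ G 1) Z) ⊔
      ℝ ∙ ⟨⁅a, b⁆, lie_mem_derivedSeries_one a b⟩ = ⊤ := by
  set Q := LinearMap.range (adRestrict (derivedSeries ℝ G 1) Z) ⊔
    ℝ ∙ (⟨⁅a, b⁆, lie_mem_derivedSeries_one a b⟩ : (derivedSeries ℝ G 1 : Submodule ℝ G))
  have hD : (derivedSeries ℝ G 1 : Submodule ℝ G) ≤ Q.map (Submodule.subtype _) := by
    refine derivedSeries_one_le_of_sup_eq_top hab (fun u hu u' hu' => ?_)
      (fun u hu s _ => mem_map.2 ⟨-adRestrict _ s ⟨u, hu⟩,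
        mem_sup_left (neg_mem (adRestrict_apply_mem_range hspan s _)), lie_skew u s⟩)
      (fun s hs s' hs' => (span_singleton_le_iff_mem _ _).2
        (mem_map.2 ⟨_, mem_sup_right (mem_span_singleton_self _), rfl⟩)
        (lie_mem_span_singleton_of_mem_span_pair hs hs'))
    rw [habelian u u' hu hu']
    exact zero_mem _
  rwa [← comap_subtype_eq_top, comap_map_eq_of_injective (injective_subtype _)] at hD

theorem not_exists_lieIdeal_decomposition [FiniteDimensional ℝ G] {Z : G}
    (habelian : ∀ u v : G, u ∈ derivedSeries ℝ G 1 → v ∈ derivedSeries ℝ G 1 → ⁅u, v⁆ = 0)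
    (hspan : (adSpan G : Submodule ℝ _) = span ℝ {adRestrict (derivedSeries ℝ G 1) Z})
    (hsing : ¬ Function.Injective (adRestrict (derivedSeries ℝ G 1) Z))
    (hG : finrank ℝ G ≤ finrank ℝ (derivedSeries ℝ G 1 : Submodule ℝ G) + 2) :
    ¬ ∃ I J : LieIdeal ℝ G, I ≠ ⊥ ∧ J ≠ ⊥ ∧ I ⊓ J = ⊥ ∧ I ⊔ J = ⊤ := by
  rintro ⟨I, J, hI, hJ, hIJ, hIJ_top⟩
  have hsup : (I : Submodule ℝ G) ⊔ J = ⊤ := by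
    rw [LieIdeal.toLieSubalgebra_toSubmodule, LieIdeal.toLieSubalgebra_toSubmodule,
      ← LieSubmodule.sup_toSubmodule, hIJ_top, LieSubmodule.top_toSubmodule]
  rcases sup_eq_top_or_sup_eq_top_or_exists_sup_span_pair_eq_top hG hsup with
    hDI | hDJ | ⟨a, ha, b, hb, hab⟩
  · exact hJ (by rw [← hIJ, lieIdeal_eq_top_of_sup_eq_top habelian hDI, top_inf_eq])
  · exact hI (by rw [← hIJ, lieIdeal_eq_top_of_sup_eq_top habelian hDJ, inf_top_eq])
  · have hab0 : ⁅a, b⁆ = 0 := by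
      simpa [hIJ] using LieSubmodule.lie_le_inf I J (LieSubmodule.lie_mem_lie ha hb)
    refine notMem_range_of_sup_span_eq_top hsing
      (range_adRestrict_sup_span_eq_top habelian hspan hab) ?_
    simp only [hab0]
    exact zero_mem _

end AdRestrict

theorem indecomposable_case_B_of_codim_two_general
    (G : Type*) [LieRing G] [LieAlgebra ℝ G] [FiniteDimensional ℝ G]
    (n : ℕ) (hn : Module.finrank ℝ G = n)
    (habelian : ∀ u v : G, u ∈ LieAlgebra.derivedSeries ℝ G 1 →
      v ∈ LieAlgebra.derivedSeries ℝ G 1 → ⁅u, v⁆ = 0)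
    (hdim : Module.finrank ℝ (LieAlgebra.derivedSeries ℝ G 1) = n - 2)
    (hA : Module.finrank ℝ (adSpan G) = 1)
    (Y Z : G)
    (hY : Y ∉ LieAlgebra.derivedSeries ℝ G 1)
    (haY : adRestrict (LieAlgebra.derivedSeries ℝ G 1) Y = 0)
    (hspan : (adSpan G : Submodule ℝ _) =
      Submodule.span ℝ {adRestrict (LieAlgebra.derivedSeries ℝ G 1) Z})
    (hsing : ¬ Function.Injective (adRestrict (LieAlgebra.derivedSeries ℝ G 1) Z)) :
    (¬ ∃ I J : LieIdeal ℝ G, I ≠ ⊥ ∧ J ≠ ⊥ ∧ I ⊓ J = ⊥ ∧ I ⊔ J = ⊤) ∧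
    Module.finrank ℝ
      (LinearMap.range (adRestrict (LieAlgebra.derivedSeries ℝ G 1) Z)) = n - 3 ∧
    ∃ (B : Basis (Fin (n - 3 + 1)) ℝ
        ((LieAlgebra.derivedSeries ℝ G 1 : LieIdeal ℝ G) : Submodule ℝ G))
      (Y' Z' : G),
      ((LieAlgebra.derivedSeries ℝ G 1 : LieIdeal ℝ G) : Submodule ℝ G) ⊓
        Submodule.span ℝ {Y', Z'} = ⊥ ∧
      ((LieAlgebra.derivedSeries ℝ G 1 : LieIdeal ℝ G) : Submodule ℝ G) ⊔
        Submodule.span ℝ {Y', Z'} = ⊤ ∧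
      ⁅Z', Y'⁆ = (B (Fin.last (n - 3)) : G) ∧
      (∀ i, ⁅Y', (B i : G)⁆ = 0) ∧
      ∃ A : Matrix (Fin (n - 3)) (Fin (n - 3)) ℝ, IsUnit A ∧
        (LinearMap.toMatrix B B (adRestrict (LieAlgebra.derivedSeries ℝ G 1) Z') = blockDiag A ∨
         LinearMap.toMatrix B B (adRestrict (LieAlgebra.derivedSeries ℝ G 1) Z') =
           blockShift A) := by
  have hD : finrank ℝ (derivedSeries ℝ G 1 : Submodule ℝ G) = n - 2 := hdim
  have haZ : adRestrict (derivedSeries ℝ G 1) Z ≠ 0 := fun h => by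
    rw [hspan, h, span_zero_singleton, finrank_bot] at hA
    exact zero_ne_one hA
  have hG : finrank ℝ G ≤ finrank ℝ (derivedSeries ℝ G 1 : Submodule ℝ G) + 2 := by omega
  have hYZ := range_adRestrict_sup_span_eq_top habelian hspan
    (isCompl_derivedSeries_span_pair habelian haZ hY haY hG).sup_eq_top
  have hrank_succ := finrank_range_add_one_of_sup_span_eq_top hsing hYZ
  have hrank : finrank ℝ (LinearMap.range (adRestrict (derivedSeries ℝ G 1) Z)) = n - 3 := by
    omega
  refine ⟨not_exists_lieIdeal_decomposition habelian hspan hsing hG, hrank, ?_⟩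
  obtain ⟨B, A, ⟨u, hu⟩, hA_unit, hA_form⟩ := exists_basis_toMatrix_eq_blockDiag_or_blockShift
    hrank (by omega) (notMem_range_of_sup_span_eq_top hsing hYZ)
  have haY' : adRestrict (derivedSeries ℝ G 1) (u - Y) = 0 := by
    rw [adRestrict_sub, adRestrict_eq_zero_of_mem habelian u.2, haY, sub_zero]
  have hY' : (u : G) - Y ∉ derivedSeries ℝ G 1 := fun h => hY (by simpa using sub_mem u.2 h)
  have hcompl := isCompl_derivedSeries_span_pair habelian haZ hY' haY' hG
  refine ⟨B, u - Y, Z, hcompl.inf_eq_bot, hcompl.sup_eq_top, ?_,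
    fun i => congrArg Subtype.val (LinearMap.congr_fun haY' (B i)), A, hA_unit, hA_form⟩
  have hZu := congrArg Subtype.val hu
  simp only [adRestrict_apply_coe, Submodule.coe_sub] at hZu
  rw [lie_sub, hZu, ← lie_skew Y Z]
  abel

/-- under the hypotheses of Theorem 2 with `[Y,Z] ≠ 0` and `a_Z` singular,
`G` is indecomposable, `rank a_Z = n - 3`, and there is an adapted basis of `G¹` in which
`a_{Z'}` has one of the two block forms `[[A,0],[0,0]]` or `[[0,A],[0,0]]` with `A`
invertible. -/
theorem indecomposable_case_B_of_codim_two
    (G : Type*) [LieRing G] [LieAlgebra ℝ G] [FiniteDimensional ℝ G]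
    [LieAlgebra.IsSolvable G] (n : ℕ) (hn : Module.finrank ℝ G = n) (hn4 : 4 ≤ n)
    (habelian : ∀ u v : G, u ∈ LieAlgebra.derivedSeries ℝ G 1 →
      v ∈ LieAlgebra.derivedSeries ℝ G 1 → ⁅u, v⁆ = 0)
    (hdim : Module.finrank ℝ (LieAlgebra.derivedSeries ℝ G 1) = n - 2)
    (hA : Module.finrank ℝ (adSpan G) = 1)
    (Y Z : G) (hind : LinearIndependent ℝ ![Y, Z])
    (hY : Y ∉ LieAlgebra.derivedSeries ℝ G 1) (hZ : Z ∉ LieAlgebra.derivedSeries ℝ G 1)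
    (haY : adRestrict (LieAlgebra.derivedSeries ℝ G 1) Y = 0)
    (hspan : (adSpan G : Submodule ℝ _) =
      Submodule.span ℝ {adRestrict (LieAlgebra.derivedSeries ℝ G 1) Z})
    (hYZ : ⁅Y, Z⁆ ≠ 0)
    (hsing : ¬ Function.Injective (adRestrict (LieAlgebra.derivedSeries ℝ G 1) Z)) :
    (¬ ∃ I J : LieIdeal ℝ G, I ≠ ⊥ ∧ J ≠ ⊥ ∧ I ⊓ J = ⊥ ∧ I ⊔ J = ⊤) ∧
    Module.finrank ℝ
      (LinearMap.range (adRestrict (LieAlgebra.derivedSeries ℝ G 1) Z)) = n - 3 ∧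
    ∃ (B : Basis (Fin (n - 3 + 1)) ℝ
        ((LieAlgebra.derivedSeries ℝ G 1 : LieIdeal ℝ G) : Submodule ℝ G))
      (Y' Z' : G),
      ((LieAlgebra.derivedSeries ℝ G 1 : LieIdeal ℝ G) : Submodule ℝ G) ⊓
        Submodule.span ℝ {Y', Z'} = ⊥ ∧
      ((LieAlgebra.derivedSeries ℝ G 1 : LieIdeal ℝ G) : Submodule ℝ G) ⊔
        Submodule.span ℝ {Y', Z'} = ⊤ ∧
      ⁅Z', Y'⁆ = (B (Fin.last (n - 3)) : G) ∧
      (∀ i, ⁅Y', (B i : G)⁆ = 0) ∧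
      ∃ A : Matrix (Fin (n - 3)) (Fin (n - 3)) ℝ, IsUnit A ∧
        (LinearMap.toMatrix B B (adRestrict (LieAlgebra.derivedSeries ℝ G 1) Z') = blockDiag A ∨
         LinearMap.toMatrix B B (adRestrict (LieAlgebra.derivedSeries ℝ G 1) Z') =
           blockShift A) :=
  indecomposable_case_B_of_codim_two_general G n hn habelian hdim hA Y Z hY haY hspan hsing
end
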